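/- arXiv:2209.07963 — 2 statements merged into one kernel-verified Lean document; each statement's English description precedes it below -/
import Mathlib

section
/- For all n ≥ 2 and all j with 1 < j < n, the composite (written left to right) of the transposition s_{n;n} followed by the deletion d_{j;n} equals the composite of d_{j;n} followed by s_{n-1;n-1}; that is, s_{n;n} d_{j;n} = d_{j;n} s_{n-1;n-1} as partial permutations from {1,…,n} to {1,…,n-1}. (Relation R1) -/
/-- Left-to-right composition of partial maps (maps written on the right):
`pcomp f g` is the composite `fg`, defined at `x` exactly when `x ∈ dom f`
and `(x)f ∈ dom g`. -/
def pcomp {α β γ : Type} (f : α → Option β) (g : β → Option γ) : α → Option γ :=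
  fun x => (f x).bind g

/-- The inversion `s_{i;n}`: for `i < n` the transposition `(i, i+1)` of `S_n`,
and for `i = n` the transposition `(1, n)`, viewed as a partial permutation
defined on `{1, …, n}`. -/
def sTn (i n : ℕ) : ℕ → Option ℕ := fun j =>
  if 1 ≤ j ∧ j ≤ n then
    some (if i = n then (if j = 1 then n else if j = n then 1 else j)
          else (if j = i then i + 1 else if j = i + 1 then i else j))
  else none

/-- The deletion `d_{i;n}`: the unique order-preserving partial permutation from
`{1, …, n}` to `{1, …, n-1}` with domain `{1, …, n} \ {i}`:
`(j)d_{i;n} = j` for `j < i` and `(j)d_{i;n} = j - 1` for `j > i`. -/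
def delP (i n : ℕ) : ℕ → Option ℕ := fun j =>
  if 1 ≤ j ∧ j ≤ n ∧ j ≠ i then (if j < i then some j else some (j - 1)) else none

/-- The rotation `c_n = (1, 2, …, n)`: `(j)c_n = j + 1` for `j < n` and `(n)c_n = 1`,
as a partial permutation defined on `{1, …, n}`. -/
def rotC (n : ℕ) : ℕ → Option ℕ := fun j =>
  if 1 ≤ j ∧ j ≤ n then some (if j = n then 1 else j + 1) else none

/-- The reflection `α_n`: `(j)α_n = n + 1 - j`, as a partial permutation defined
on `{1, …, n}`. -/
def refA (n : ℕ) : ℕ → Option ℕ := fun j =>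
  if 1 ≤ j ∧ j ≤ n then some (n + 1 - j) else none

/-- `ppow f k` is the `k`-th power of `f` under left-to-right composition. -/
def ppow (f : ℕ → Option ℕ) : ℕ → (ℕ → Option ℕ)
  | 0 => fun x => some x
  | k + 1 => pcomp (ppow f k) f

/-!
Away from `j`, the deletion `d_{j;n}` sends `1 ↦ 1` and `n ↦ n - 1` (since `1 < j < n`) and maps
the interior `{2, …, n - 1}` into the interior `{2, …, n - 2}`. So it carries the transposition
`(1, n)` to `(1, n - 1)`: both sides send `1 ↦ n - 1`, `n ↦ 1`, fix the other points of the
domain, and are undefined at `j` and outside `{1, …, n}`.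
-/

section Transposition

variable {n x : ℕ}

theorem sTn_self_of_not_mem (hx : ¬(1 ≤ x ∧ x ≤ n)) : sTn n n x = none := if_neg hx

theorem sTn_self_one (hn : 1 ≤ n) : sTn n n 1 = some n := by
  simp only [sTn]
  split_ifs <;> first | rfl | omega

theorem sTn_self_self (hn : 1 ≤ n) : sTn n n n = some 1 := by
  simp only [sTn]
  split_ifs with _ hn1 <;> first | rfl | omega | rw [hn1]

theorem sTn_self_of_lt_of_lt (h1 : 1 < x) (hn : x < n) : sTn n n x = some x := by
  simp only [sTn]
  split_ifs <;> first | rfl | omega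

end Transposition

section Deletion

variable {j n x : ℕ}

theorem delP_of_not_mem (hx : ¬(1 ≤ x ∧ x ≤ n)) : delP j n x = none :=
  if_neg fun h => hx ⟨h.1, h.2.1⟩

theorem delP_self : delP j n j = none :=
  if_neg fun h => h.2.2 rfl

theorem delP_one (hj : 1 < j) (hn : 1 ≤ n) : delP j n 1 = some 1 := by
  simp only [delP]
  split_ifs <;> first | rfl | omega

theorem delP_last (hj : j < n) : delP j n n = some (n - 1) := by
  simp only [delP]
  split_ifs <;> first | rfl | omega

theorem delP_interior (hj1 : 1 < j) (hjn : j < n) (h1 : 1 < x) (hn : x < n) (hx : x ≠ j) :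
    ∃ y, delP j n x = some y ∧ 1 < y ∧ y < n - 1 := by
  simp only [delP]
  split_ifs
  exacts [⟨x, rfl, h1, by omega⟩, ⟨x - 1, rfl, by omega, by omega⟩, by omega]

end Deletion

theorem relation_R1_general (n j : ℕ) (hj1 : 1 < j) (hj2 : j < n) :
    pcomp (sTn n n) (delP j n) = pcomp (delP j n) (sTn (n - 1) (n - 1)) := by
  funext x
  simp only [pcomp]
  by_cases hx : 1 ≤ x ∧ x ≤ n
  · obtain ⟨hx1, hxn⟩ := hx
    rcases hx1.eq_or_lt with rfl | h1
    · rw [sTn_self_one (by omega), delP_one hj1 (by omega), Option.bind_some, Option.bind_some,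
        delP_last hj2, sTn_self_one (by omega)]
    rcases hxn.eq_or_lt with rfl | hn
    · rw [sTn_self_self (by omega), delP_last hj2, Option.bind_some, Option.bind_some,
        delP_one hj1 (by omega), sTn_self_self (by omega)]
    rw [sTn_self_of_lt_of_lt h1 hn, Option.bind_some]
    by_cases hxj : x = j
    · rw [hxj, delP_self, Option.bind_none]
    obtain ⟨y, hy, hy1, hyn⟩ := delP_interior hj1 hj2 h1 hn hxj
    rw [hy, Option.bind_some, sTn_self_of_lt_of_lt hy1 hyn]
  · rw [sTn_self_of_not_mem hx, delP_of_not_mem hx, Option.bind_none, Option.bind_none]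

/-- **Relation R1**: for all `n ≥ 2` and `1 < j < n`,
`s_{n;n} d_{j;n} = d_{j;n} s_{n-1;n-1}` as partial permutations from
`{1,…,n}` to `{1,…,n-1}` (composition written left to right). -/
theorem relation_R1 (n j : ℕ) (hn : 2 ≤ n) (hj1 : 1 < j) (hj2 : j < n) :
    pcomp (sTn n n) (delP j n) = pcomp (delP j n) (sTn (n - 1) (n - 1)) :=
  relation_R1_general n j hj1 hj2
end

section
/- Let f be an orientation-preserving partial permutation from {1,…,m} to {1,…,n}, i.e. f ∈ POPI_{m,n}. Then there exists a natural number r such that the composite (left to right) of f followed by the r-th power of the rotation c_n is order preserving, i.e. f c_n^r ∈ POI_{m,n}. -/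
/-- The composite (left to right) of a word `t` of inversions `s_{i;m}` from `T_m`
(given by its list of indices `i`). -/
def invWord (m : ℕ) (t : List ℕ) : ℕ → Option ℕ :=
  t.foldr (fun i g => pcomp (sTn i m) g) (fun x => some x)

/-- `CyclicDescent f (i, j)`: `i` and `j` are cyclically consecutive elements of
the domain of `f` (either consecutive in the domain, or `i` is the maximum and `j`
the minimum of the domain) and `(i)f > (j)f`; these are exactly the cyclic
descents of the sequence `((x_1)f, …, (x_k)f)` where `dom(f) = {x_1 < ⋯ < x_k}`. -/
def CyclicDescent (f : ℕ → Option ℕ) (p : ℕ × ℕ) : Prop :=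
  ∃ a b : ℕ, f p.1 = some a ∧ f p.2 = some b ∧ b < a ∧
    ((p.1 < p.2 ∧ ∀ l : ℕ, p.1 < l → l < p.2 → f l = none) ∨
     (p.2 < p.1 ∧ (∀ l : ℕ, l < p.2 → f l = none) ∧ (∀ l : ℕ, p.1 < l → f l = none)))

/-- `f` is orientation preserving (`f ∈ POPI`): with `dom(f) = {x_1 < ⋯ < x_k}`,
the sequence `((x_1)f, …, (x_k)f)` is cyclic, i.e. there is at most one index `i`
with `(x_i)f > (x_{i+1 mod k})f`. -/
def IsPOPI (f : ℕ → Option ℕ) : Prop :=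
  ∀ p q : ℕ × ℕ, CyclicDescent f p → CyclicDescent f q → p = q

/-- `f` is order preserving (`f ∈ POI`): for all `i, j` in the domain of `f`,
`i < j` implies `(i)f < (j)f`. -/
def IsPOI (f : ℕ → Option ℕ) : Prop :=
  ∀ i j a b : ℕ, f i = some a → f j = some b → i < j → a < b

/-! If `f` has an inversion at all, orientation preservation forces every inversion to straddle
one and the same pair of consecutive domain points `p < q`, and the value at the maximum of the
domain to lie below the value `c` at its minimum. Hence `f` increases on `dom f ∩ [0, p]`, where
its values are `≥ c`, and on `dom f ∩ [q, ∞)`, where they are `< c`. The rotation `c_n^(n+1-c)`,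
which sends `c` to `1`, moves the values `< c` above those `≥ c` and keeps each block in order. -/

def IsInversion (f : ℕ → Option ℕ) (i j : ℕ) : Prop :=
  i < j ∧ ∃ a b, f i = some a ∧ f j = some b ∧ b < a

section Domain

variable {f : ℕ → Option ℕ} {x0 xM l a : ℕ}

theorem le_of_isLeast_dom (hmin : IsLeast {x | f x ≠ none} x0) (hl : f l = some a) : x0 ≤ l :=
  hmin.2 (by simp [hl])

theorem le_of_isGreatest_dom (hmax : IsGreatest {x | f x ≠ none} xM) (hl : f l = some a) :
    l ≤ xM :=
  hmax.2 (by simp [hl])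

theorem eq_none_of_lt_of_isLeast_dom (hmin : IsLeast {x | f x ≠ none} x0) (hl : l < x0) :
    f l = none :=
  not_not.1 fun h => (hmin.2 h).not_gt hl

theorem eq_none_of_gt_of_isGreatest_dom (hmax : IsGreatest {x | f x ≠ none} xM) (hl : xM < l) :
    f l = none :=
  not_not.1 fun h => (hmax.2 h).not_gt hl

end Domain

theorem IsInversion.exists_cyclicDescent {f : ℕ → Option ℕ} {x y : ℕ} (h : IsInversion f x y) :
    ∃ x' y', x ≤ x' ∧ x' < y' ∧ y' ≤ y ∧ CyclicDescent f (x', y') := by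
  induction hd : y - x using Nat.strong_induction_on generalizing x y with
  | _ d ih =>
  obtain ⟨hxy, a, b, ha, hb, hba⟩ := h
  by_cases hgap : ∀ l, x < l → l < y → f l = none
  · exact ⟨x, y, le_rfl, hxy, le_rfl, a, b, ha, hb, hba, Or.inl ⟨hxy, hgap⟩⟩
  push Not at hgap
  obtain ⟨l, hxl, hly, hl⟩ := hgap
  obtain ⟨w, hw⟩ := Option.ne_none_iff_exists'.mp hl
  rcases lt_or_ge w a with hwa | haw
  · obtain ⟨x', y', hx', hxy', hy', hdesc⟩ := ih (l - x) (by omega) ⟨hxl, a, w, ha, hw, hwa⟩ rfl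
    exact ⟨x', y', hx', hxy', by omega, hdesc⟩
  · obtain ⟨x', y', hx', hxy', hy', hdesc⟩ :=
      ih (y - l) (by omega) ⟨hly, w, b, hw, hb, by omega⟩ rfl
    exact ⟨x', y', by omega, hxy', hy', hdesc⟩

theorem isInversion_min {f : ℕ → Option ℕ} {x0 c k u : ℕ}
    (hmin : IsLeast {x | f x ≠ none} x0) (hc : f x0 = some c) (hk : f k = some u) (huc : u < c) :
    IsInversion f x0 k := by
  have hx0k := le_of_isLeast_dom hmin hk
  have hne : x0 ≠ k := by rintro rfl; rw [hc] at hk; cases hk; omega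
  exact ⟨by omega, c, u, hc, hk, huc⟩

namespace IsPOPI

variable {f : ℕ → Option ℕ} {i j k l x0 xM c d : ℕ}

/-- Both inversions contain the unique non-wrapping cyclic descent. -/
theorem lt_of_isInversion (hf : IsPOPI f) (hij : IsInversion f i j) (hkl : IsInversion f k l) :
    k < j := by
  obtain ⟨x, y, -, hxy, hyj, hdesc⟩ := hij.exists_cyclicDescent
  obtain ⟨x', y', hkx', -, -, hdesc'⟩ := hkl.exists_cyclicDescent
  obtain ⟨rfl, rfl⟩ := Prod.mk.inj (hf _ _ hdesc hdesc')
  omega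

/-- Otherwise the wrap-around pair `(xM, x0)` would be a second cyclic descent. -/
theorem le_of_isInversion (hf : IsPOPI f) (hij : IsInversion f i j)
    (hmin : IsLeast {x | f x ≠ none} x0) (hmax : IsGreatest {x | f x ≠ none} xM)
    (hc : f x0 = some c) (hd : f xM = some d) : d ≤ c := by
  by_contra! hcd
  obtain ⟨x, y, -, hxy, -, hdesc⟩ := hij.exists_cyclicDescent
  obtain ⟨hij', a, b, ha, hb, -⟩ := hij
  have hx0i := le_of_isLeast_dom hmin ha
  have hjxM := le_of_isGreatest_dom hmax hb
  have hwrap : CyclicDescent f (xM, x0) :=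
    ⟨d, c, hd, hc, hcd, Or.inr ⟨by omega, fun _ => eq_none_of_lt_of_isLeast_dom hmin,
      fun _ => eq_none_of_gt_of_isGreatest_dom hmax⟩⟩
  obtain ⟨rfl, rfl⟩ := Prod.mk.inj (hf _ _ hwrap hdesc)
  omega

theorem isInversion_max (hf : IsPOPI f) (hinj : ∀ i i' a, f i = some a → f i' = some a → i = i')
    (hij : IsInversion f i j) (hmin : IsLeast {x | f x ≠ none} x0)
    (hmax : IsGreatest {x | f x ≠ none} xM) (hc : f x0 = some c) (hd : f xM = some d)
    {v : ℕ} (hk : f k = some v) (hx0k : x0 < k) (hcv : c ≤ v) : IsInversion f k xM := by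
  have hdc := hf.le_of_isInversion hij hmin hmax hc hd
  have hkM := le_of_isGreatest_dom hmax hk
  rcases eq_or_ne d v with rfl | hdv
  · have hck : x0 = k := hinj _ _ _ hc (le_antisymm hdc hcv ▸ hk)
    omega
  · have hkxM : k ≠ xM := by rintro rfl; exact hdv (Option.some.inj (hd.symm.trans hk))
    exact ⟨by omega, v, d, hk, hd, by omega⟩

/-- For `i < j` in the domain, `(i)f` precedes `(j)f` in the order
`c < c + 1 < ⋯ < n < 1 < ⋯ < c - 1` obtained by reading `{1, …, n}` cyclically from `c`. -/
theorem precedes_cyclically_from_min (hf : IsPOPI f)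
    (hinj : ∀ i i' a, f i = some a → f i' = some a → i = i')
    (hmin : IsLeast {x | f x ≠ none} x0) (hmax : IsGreatest {x | f x ≠ none} xM)
    (hc : f x0 = some c) (hd : f xM = some d) {u v : ℕ}
    (hu : f i = some u) (hv : f j = some v) (hij : i < j) :
    (c ≤ u ∧ v < c) ∨ ((c ≤ u ↔ c ≤ v) ∧ u < v) := by
  have hx0i := le_of_isLeast_dom hmin hu
  rcases lt_trichotomy u v with huv | rfl | hvu
  · refine Or.inr ⟨⟨fun hcu => hcu.trans huv.le, fun hcv => ?_⟩, huv⟩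
    by_contra! huc
    have hx0 := isInversion_min hmin hc hu huc
    have hjM := hf.isInversion_max hinj hx0 hmin hmax hc hd hv (by omega) hcv
    have := hf.lt_of_isInversion hx0 hjM
    omega
  · exact absurd (hinj _ _ _ hu hv) hij.ne
  · have hinv : IsInversion f i j := ⟨hij, u, v, hu, hv, hvu⟩
    refine Or.inl ⟨?_, ?_⟩
    · by_contra! huc
      have := hf.lt_of_isInversion (isInversion_min hmin hc hu huc) hinv
      omega
    · by_contra! hcv
      have := hf.lt_of_isInversion hinv
        (hf.isInversion_max hinj hinv hmin hmax hc hd hv (by omega) hcv)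
      omega

end IsPOPI

theorem ppow_rotC_apply {n w : ℕ} (r : ℕ) (hw : 1 ≤ w) (hwn : w ≤ n) :
    ppow (rotC n) r w = some ((w - 1 + r) % n + 1) := by
  induction r with
  | zero =>
    show some w = _
    rw [add_zero, Nat.mod_eq_of_lt (by omega), Nat.sub_add_cancel hw]
  | succ r ih =>
    show (ppow (rotC n) r w).bind (rotC n) = _
    have hlt : (w - 1 + r) % n < n := Nat.mod_lt _ (by omega)
    have hdecomp := Nat.div_add_mod (w - 1 + r) n
    rw [ih, Option.bind_some, rotC, if_pos ⟨by omega, by omega⟩, Option.some_inj,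
      show w - 1 + (r + 1) = n * ((w - 1 + r) / n) + ((w - 1 + r) % n + 1) by omega,
      Nat.mul_add_mod]
    split_ifs with hwrap
    · rw [hwrap, Nat.mod_self]
    · rw [Nat.mod_eq_of_lt (a := (w - 1 + r) % n + 1) (by omega)]

theorem ppow_rotC_sub_apply {n c w : ℕ} (hc : 1 ≤ c) (hcn : c ≤ n) (hw : 1 ≤ w) (hwn : w ≤ n) :
    ppow (rotC n) (n + 1 - c) w = some (if c ≤ w then w + 1 - c else w + n + 1 - c) := by
  rw [ppow_rotC_apply _ hw hwn, Option.some_inj]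
  split_ifs with hcw
  · rw [show w - 1 + (n + 1 - c) = w - c + n by omega, Nat.add_mod_right,
      Nat.mod_eq_of_lt (by omega)]
    omega
  · rw [Nat.mod_eq_of_lt (by omega)]
    omega

theorem isPOI_pcomp_ppow_rotC {f : ℕ → Option ℕ} {n c : ℕ}
    (hrange : ∀ i u, f i = some u → 1 ≤ u ∧ u ≤ n) (hc : 1 ≤ c) (hcn : c ≤ n)
    (hord : ∀ i j u v, f i = some u → f j = some v → i < j →
      (c ≤ u ∧ v < c) ∨ ((c ≤ u ↔ c ≤ v) ∧ u < v)) :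
    IsPOI (pcomp f (ppow (rotC n) (n + 1 - c))) := by
  intro i j a b ha hb hij
  obtain ⟨u, hu, hua⟩ := Option.bind_eq_some_iff.mp ha
  obtain ⟨v, hv, hvb⟩ := Option.bind_eq_some_iff.mp hb
  obtain ⟨hu1, hun⟩ := hrange i u hu
  obtain ⟨hv1, hvn⟩ := hrange j v hv
  rw [ppow_rotC_sub_apply hc hcn hu1 hun, Option.some_inj] at hua
  rw [ppow_rotC_sub_apply hc hcn hv1 hvn, Option.some_inj] at hvb
  have := hord i j u v hu hv hij
  split_ifs at hua hvb <;> omega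

/-- If `f ∈ POPI_{m,n}` is an orientation-preserving partial permutation from
`{1,…,m}` to `{1,…,n}`, then there is a natural number `r` such that the composite
(left to right) of `f` with the `r`-th power of the rotation `c_n` is order
preserving: `f c_n^r ∈ POI_{m,n}`. -/
theorem popi_rotate_to_poi (m n : ℕ) (f : ℕ → Option ℕ)
    (hdom : ∀ i j : ℕ, f i = some j → 1 ≤ i ∧ i ≤ m ∧ 1 ≤ j ∧ j ≤ n)
    (hinj : ∀ i i' j : ℕ, f i = some j → f i' = some j → i = i')
    (hpopi : IsPOPI f) :
    ∃ r : ℕ, IsPOI (pcomp f (ppow (rotC n) r)) := by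
  by_cases hempty : ∀ x, f x = none
  · exact ⟨0, fun i _ _ _ hi => by simp [pcomp, hempty i] at hi⟩
  push Not at hempty
  have hne : {x | f x ≠ none}.Nonempty := hempty
  have hbdd : BddAbove {x | f x ≠ none} := ⟨m, fun x hx => by
    obtain ⟨u, hu⟩ := Option.ne_none_iff_exists'.mp hx
    exact (hdom x u hu).2.1⟩
  have hmin := isLeast_csInf hne
  obtain ⟨xM, hmax⟩ := hbdd.exists_isGreatest_of_nonempty hne
  obtain ⟨c, hc⟩ := Option.ne_none_iff_exists'.mp hmin.1
  obtain ⟨d, hd⟩ := Option.ne_none_iff_exists'.mp hmax.1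
  have hrange : ∀ i u, f i = some u → 1 ≤ u ∧ u ≤ n := fun i u h => (hdom i u h).2.2
  exact ⟨n + 1 - c, isPOI_pcomp_ppow_rotC hrange (hrange _ _ hc).1 (hrange _ _ hc).2
    fun _ _ _ _ => hpopi.precedes_cyclically_from_min hinj hmin hmax hc hd⟩
end
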